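/- Let f : ℝⁿ → ℝ be a PLQ function with polyhedral pieces P¹, …, P^I and associated quadratic functions q₁, …, q_I, let X ⊆ ℝⁿ be a polyhedron, and set P̃ⁱ := X ∩ Pⁱ and A(x̄) := {i : x̄ ∈ Pⁱ}. For x̄ ∈ X the following are all equivalent: (a1) x̄ is a strong local minimizer of f on X; (a2) x̄ is a strict local minimizer of f on X; (a3) x̄ is an isolated local minimizer of f on X; (a4) x̄ is an isolated stationary point and a local minimizer of f on X; (b1)–(b4) the corresponding four statements hold for q_i on P̃ⁱ for every i ∈ A(x̄); (c) f'(x̄; x − x̄) ≥ 0 for all x ∈ X and f⁽²⁾(x̄; x − x̄) > 0 for all x ∈ X \ {x̄} with f'(x̄; x − x̄) = 0; (d1) x̄ is a directional stationary point of f on X and f⁽²⁾(x̄;v) > 0 for all nonzero v ∈ T(x̄;X) with f'(x̄;v) = 0 (the second-order sufficient condition); (d2) for every i ∈ A(x̄), x̄ is a stationary point of q_i on P̃ⁱ and ∇²q_i(x̄) is strictly copositive on the critical cone C(x̄;q_i;P̃ⁱ). -/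

import Mathlib

/-!
Near `x̄` the function `f` agrees with `qᵢ` on `X ∩ Pⁱ`, and only active pieces meet a small
neighbourhood of `x̄`; so minimality, strictness, growth and isolation of `f` at `x̄` reduce to the
same properties of the quadratic programs `min {qᵢ(x) : x ∈ X ∩ Pⁱ}`, with constants taken uniform
over the finitely many active pieces. Directional derivatives of `f` are those of a piece that
contains an initial segment of the ray.

For a quadratic `q` on a polyhedron `S` everything is read off the exact expansion
`q(x̄ + τv) = q(x̄) + τ ∇q(x̄)ᵀv + τ²/2 vᵀQv`, since tangent vectors of a polyhedron are feasible
directions. A critical direction with `vᵀQv = 0` yields nearby points of equal value, so strictness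
forces strict copositivity on the critical cone. Conversely, stationarity and strict copositivity
give, by compactness of the unit sphere, a bound `∇q(x̄)ᵀd + t dᵀQd ≥ C‖d‖²` on `S - x̄` near `0`:
for `t = 1/2` this is quadratic growth, and for `t = 1` it rules out stationary points `x̄ + d`.
-/

open Filter Topology Set

noncomputable section

/-- Euclidean norm on `Fin n → ℝ`. -/
def n2 {n : ℕ} (v : Fin n → ℝ) : ℝ := Real.sqrt (∑ i, v i ^ 2)

/-- A polyhedron `{x : Ax ≤ b}`. -/
def IsPolyhedron {n : ℕ} (S : Set (Fin n → ℝ)) : Prop :=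
  ∃ (m : ℕ) (A : Matrix (Fin m) (Fin n) ℝ) (b : Fin m → ℝ),
    S = {x | ∀ i, (∑ j, A i j * x j) ≤ b i}

/-- The tangent cone of `S` at `x`. -/
def TangentCone {n : ℕ} (S : Set (Fin n → ℝ)) (x : Fin n → ℝ) : Set (Fin n → ℝ) :=
  {v | ∃ (xs : ℕ → Fin n → ℝ) (τ : ℕ → ℝ),
    (∀ k, xs k ∈ S) ∧ Tendsto xs atTop (𝓝 x) ∧
    (∀ k, 0 < τ k) ∧ Tendsto τ atTop (𝓝 (0:ℝ)) ∧
    Tendsto (fun k => (τ k)⁻¹ • (xs k - x)) atTop (𝓝 v)}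

/-- One-sided directional derivative: `f'(x;v) = d`. -/
def HasDirDeriv {n : ℕ} (f : (Fin n → ℝ) → ℝ) (x v : Fin n → ℝ) (d : ℝ) : Prop :=
  Tendsto (fun τ : ℝ => (f (x + τ • v) - f x) / τ) (𝓝[>] 0) (𝓝 d)

/-- Second-order directional derivative: `f'(x;v) = d₁` and `f⁽²⁾(x;v) = d₂`. -/
def HasDirDeriv2 {n : ℕ} (f : (Fin n → ℝ) → ℝ) (x v : Fin n → ℝ) (d₁ d₂ : ℝ) : Prop :=
  HasDirDeriv f x v d₁ ∧
  Tendsto (fun τ : ℝ => 2 * (f (x + τ • v) - f x - τ * d₁) / τ ^ 2) (𝓝[>] 0) (𝓝 d₂)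

/-- Local minimizer of `f` on `X`. -/
def IsLocMin' {n : ℕ} (f : (Fin n → ℝ) → ℝ) (X : Set (Fin n → ℝ)) (xbar : Fin n → ℝ) : Prop :=
  xbar ∈ X ∧ ∃ ε > (0:ℝ), ∀ y ∈ X, n2 (y - xbar) < ε → f xbar ≤ f y

/-- Strict local minimizer of `f` on `X`. -/
def IsStrictLocMin {n : ℕ} (f : (Fin n → ℝ) → ℝ) (X : Set (Fin n → ℝ)) (xbar : Fin n → ℝ) : Prop :=
  xbar ∈ X ∧ ∃ ε > (0:ℝ), ∀ y ∈ X, n2 (y - xbar) < ε → y ≠ xbar → f xbar < f y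

/-- Strong local minimizer of `f` on `X`. -/
def IsStrongLocMin {n : ℕ} (f : (Fin n → ℝ) → ℝ) (X : Set (Fin n → ℝ)) (xbar : Fin n → ℝ) : Prop :=
  xbar ∈ X ∧ ∃ c > (0:ℝ), ∃ ε > (0:ℝ), ∀ y ∈ X, n2 (y - xbar) < ε →
    f xbar + c * n2 (y - xbar) ^ 2 ≤ f y

/-- Isolated local minimizer of `f` on `X`. -/
def IsIsolatedLocMin {n : ℕ} (f : (Fin n → ℝ) → ℝ) (X : Set (Fin n → ℝ)) (xbar : Fin n → ℝ) : Prop :=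
  IsLocMin' f X xbar ∧ ∃ ε > (0:ℝ), ∀ y, IsLocMin' f X y → n2 (y - xbar) < ε → y = xbar

/-- Directional stationary point of `f` on `X` (via one-sided directional derivatives). -/
def IsStatF {n : ℕ} (f : (Fin n → ℝ) → ℝ) (X : Set (Fin n → ℝ)) (y : Fin n → ℝ) : Prop :=
  y ∈ X ∧ ∀ x ∈ X, ∃ d, HasDirDeriv f y (x - y) d ∧ 0 ≤ d

/-- Isolated stationary point of `f` on `X`. -/
def IsIsolatedStatF {n : ℕ} (f : (Fin n → ℝ) → ℝ) (X : Set (Fin n → ℝ)) (xbar : Fin n → ℝ) : Prop :=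
  IsStatF f X xbar ∧ ∃ ε > (0:ℝ), ∀ y, IsStatF f X y → n2 (y - xbar) < ε → y = xbar

/-- The quadratic function `q(x) = ½ xᵀQx + cᵀx + α`. -/
def quadF {n : ℕ} (Q : Matrix (Fin n) (Fin n) ℝ) (c : Fin n → ℝ) (α : ℝ)
    (x : Fin n → ℝ) : ℝ :=
  (1/2) * (∑ i, ∑ j, Q i j * x i * x j) + (∑ i, c i * x i) + α

/-- The gradient `∇q(x) = Qx + c` (for symmetric `Q`). -/
def gradQ {n : ℕ} (Q : Matrix (Fin n) (Fin n) ℝ) (c : Fin n → ℝ) (x : Fin n → ℝ) :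
    Fin n → ℝ :=
  fun i => (∑ j, Q i j * x j) + c i

/-- Stationary point of the QP `min_{x∈S} q(x)`. -/
def IsStatQ {n : ℕ} (Q : Matrix (Fin n) (Fin n) ℝ) (c : Fin n → ℝ)
    (S : Set (Fin n → ℝ)) (y : Fin n → ℝ) : Prop :=
  y ∈ S ∧ ∀ x ∈ S, 0 ≤ ∑ i, gradQ Q c y i * (x i - y i)

/-- Isolated stationary point of the QP `min_{x∈S} q(x)`. -/
def IsIsolatedStatQ {n : ℕ} (Q : Matrix (Fin n) (Fin n) ℝ) (c : Fin n → ℝ)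
    (S : Set (Fin n → ℝ)) (xbar : Fin n → ℝ) : Prop :=
  IsStatQ Q c S xbar ∧ ∃ ε > (0:ℝ), ∀ y, IsStatQ Q c S y → n2 (y - xbar) < ε → y = xbar


lemma n2_eq_norm {n : ℕ} (v : Fin n → ℝ) : n2 v = ‖WithLp.toLp 2 v‖ := by
  simp [n2, EuclideanSpace.norm_eq, sq_abs]

lemma n2_nonneg {n : ℕ} (v : Fin n → ℝ) : 0 ≤ n2 v := Real.sqrt_nonneg _

lemma n2_pos {n : ℕ} {v : Fin n → ℝ} (hv : v ≠ 0) : 0 < n2 v := by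
  simpa [n2_eq_norm] using hv

lemma n2_smul {n : ℕ} (t : ℝ) (v : Fin n → ℝ) : n2 (t • v) = |t| * n2 v := by
  simp [n2_eq_norm, norm_smul]

lemma n2_add_le {n : ℕ} (v w : Fin n → ℝ) : n2 (v + w) ≤ n2 v + n2 w := by
  simpa [n2_eq_norm] using norm_add_le (WithLp.toLp 2 v) (WithLp.toLp 2 w)

lemma continuous_n2 {n : ℕ} : Continuous (n2 (n := n)) := by
  rw [funext n2_eq_norm]
  exact continuous_norm.comp (PiLp.continuous_toLp 2 _)

lemma norm_le_n2 {n : ℕ} (v : Fin n → ℝ) : ‖v‖ ≤ n2 v :=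
  (pi_norm_le_iff_of_nonneg (n2_nonneg v)).2 fun i => by
    simpa [n2_eq_norm] using PiLp.norm_apply_le (WithLp.toLp 2 v) i

lemma exists_n2_lt_of_eventually {n : ℕ} {x : Fin n → ℝ} {p : (Fin n → ℝ) → Prop}
    (h : ∀ᶠ y in 𝓝 x, p y) : ∃ ε > 0, ∀ y, n2 (y - x) < ε → p y := by
  obtain ⟨ε, hε, hp⟩ := Metric.eventually_nhds_iff.1 h
  exact ⟨ε, hε, fun y hy => hp ((dist_eq_norm y x).trans_lt ((norm_le_n2 _).trans_lt hy))⟩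

lemma isCompact_n2_eq_one {n : ℕ} : IsCompact {v : Fin n → ℝ | n2 v = 1} :=
  Metric.isCompact_of_isClosed_isBounded (isClosed_eq continuous_n2 continuous_const)
    ((Metric.isBounded_closedBall (x := 0) (r := 1)).subset fun v hv => by
      simpa [show n2 v = 1 from hv] using norm_le_n2 v)

open Matrix in
lemma isPolyhedron_iff {n : ℕ} {S : Set (Fin n → ℝ)} :
    IsPolyhedron S ↔ ∃ (m : ℕ) (A : Matrix (Fin m) (Fin n) ℝ) (b : Fin m → ℝ),
      S = {x | A *ᵥ x ≤ b} :=
  Iff.rfl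

namespace IsPolyhedron

variable {n : ℕ} {S T : Set (Fin n → ℝ)}

lemma isClosed (hS : IsPolyhedron S) : IsClosed S := by
  obtain ⟨m, A, b, rfl⟩ := isPolyhedron_iff.1 hS
  exact isClosed_le (continuous_const.matrix_mulVec continuous_id) continuous_const

lemma convex (hS : IsPolyhedron S) : Convex ℝ S := by
  obtain ⟨m, A, b, rfl⟩ := isPolyhedron_iff.1 hS
  exact convex_halfSpace_le A.mulVecLin.isLinear b

lemma inter (hS : IsPolyhedron S) (hT : IsPolyhedron T) : IsPolyhedron (S ∩ T) := by
  obtain ⟨m, A, b, rfl⟩ := isPolyhedron_iff.1 hS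
  obtain ⟨m', A', b', rfl⟩ := isPolyhedron_iff.1 hT
  refine isPolyhedron_iff.2 ⟨m + m', Matrix.of (Fin.append (fun i j => A i j) (fun i j => A' i j)),
    Fin.append b b', ?_⟩
  ext x
  simp [Pi.le_def, Fin.forall_fin_add, Matrix.mulVec]

end IsPolyhedron

lemma Convex.add_smul_mem_of_mem_Icc {E : Type*} [AddCommGroup E] [Module ℝ E] {S : Set E}
    (hS : Convex ℝ S) {x v : E} {δ τ : ℝ} (hx : x ∈ S) (hδ : x + δ • v ∈ S) (hτ : τ ∈ Icc 0 δ) :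
    x + τ • v ∈ S := by
  rcases hτ.1.eq_or_lt with rfl | hτ0
  · simpa using hx
  have hδ0 : 0 < δ := hτ0.trans_le hτ.2
  have := hS.add_smul_mem hx hδ (t := τ / δ) ⟨by positivity, div_le_one_of_le₀ hτ.2 hδ0.le⟩
  rwa [smul_smul, div_mul_cancel₀ _ hδ0.ne'] at this

lemma mem_tangentCone_of_add_smul_mem {n : ℕ} {S : Set (Fin n → ℝ)} (hS : Convex ℝ S)
    {x v : Fin n → ℝ} {δ : ℝ} (hx : x ∈ S) (hδ : 0 < δ) (h : x + δ • v ∈ S) :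
    v ∈ TangentCone S x := by
  set τ : ℕ → ℝ := fun k => δ / (k + 1)
  have hτ : ∀ k, τ k ∈ Icc 0 δ := fun k =>
    ⟨by positivity, div_le_self hδ.le (by linarith [(k.cast_nonneg : (0:ℝ) ≤ k)])⟩
  have hτ0 : Tendsto τ atTop (𝓝 0) := by
    have := tendsto_one_div_add_atTop_nhds_zero_nat.const_mul δ
    rw [mul_zero] at this
    exact this.congr fun k => mul_one_div δ _
  refine ⟨fun k => x + τ k • v, τ, fun k => hS.add_smul_mem_of_mem_Icc hx h (hτ k), ?_,
    fun k => by positivity, hτ0, ?_⟩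
  · simpa using tendsto_const_nhds.add (hτ0.smul_const v)
  · refine tendsto_const_nhds.congr fun k => ?_
    rw [add_sub_cancel_left, smul_smul, inv_mul_cancel₀ (by positivity), one_smul]

lemma tangentCone_mono {n : ℕ} {S T : Set (Fin n → ℝ)} (h : S ⊆ T) (x : Fin n → ℝ) :
    TangentCone S x ⊆ TangentCone T x :=
  fun _ ⟨xs, τ, hxs, hlim⟩ => ⟨xs, τ, fun k => h (hxs k), hlim⟩

open Matrix in
lemma IsPolyhedron.exists_add_smul_mem_of_mem_tangentCone {n : ℕ} {S : Set (Fin n → ℝ)}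
    (hS : IsPolyhedron S) {x v : Fin n → ℝ} (hx : x ∈ S) (hv : v ∈ TangentCone S x) :
    ∃ δ > (0:ℝ), x + δ • v ∈ S := by
  obtain ⟨m, A, b, rfl⟩ := isPolyhedron_iff.1 hS
  obtain ⟨xs, τ, hxs, -, hτ, -, hlim⟩ := hv
  have hrow : ∀ i, ∀ᶠ δ in 𝓝[>] (0:ℝ), (A *ᵥ x) i + δ * (A *ᵥ v) i ≤ b i := by
    intro i
    rcases (hx i).eq_or_lt with hact | hinact
    · have hAv : (A *ᵥ v) i ≤ 0 := by
        have hcont : Continuous fun w : Fin n → ℝ => (A *ᵥ w) i :=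
          (continuous_apply i).comp (continuous_const.matrix_mulVec continuous_id)
        refine le_of_tendsto (hcont.tendsto v |>.comp hlim) (Eventually.of_forall fun k => ?_)
        have hk : (A *ᵥ xs k) i - b i ≤ 0 := by linarith [hxs k i]
        simpa [mulVec_smul, mulVec_sub, hact] using
          mul_nonpos_of_nonneg_of_nonpos (inv_nonneg.2 (hτ k).le) hk
      filter_upwards [self_mem_nhdsWithin] with δ (hδ : 0 < δ)
      nlinarith
    · have hcont : Continuous fun δ : ℝ => (A *ᵥ x) i + δ * (A *ᵥ v) i := by fun_prop
      have hlt := (hcont.continuousAt (x := 0)).eventually_lt continuousAt_const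
        (by simpa using hinact)
      exact (hlt.filter_mono nhdsWithin_le_nhds).mono fun _ h => h.le
  obtain ⟨δ, hδS, hδ⟩ := ((eventually_all.2 hrow).and self_mem_nhdsWithin).exists
  exact ⟨δ, hδ, fun i => by simpa [mulVec_add, mulVec_smul] using hδS i⟩

section Quadratic

open Matrix

variable {n : ℕ} {Q : Matrix (Fin n) (Fin n) ℝ} {c : Fin n → ℝ} {α : ℝ}

lemma sum_sum_mul_eq_dotProduct_mulVec (Q : Matrix (Fin n) (Fin n) ℝ) (v w : Fin n → ℝ) :
    ∑ k, ∑ l, Q k l * v k * w l = v ⬝ᵥ (Q *ᵥ w) := by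
  simp only [dotProduct, mulVec, Finset.mul_sum]
  exact Finset.sum_congr rfl fun _ _ => Finset.sum_congr rfl fun _ _ => by ring

lemma sum_gradQ_mul (Q : Matrix (Fin n) (Fin n) ℝ) (c x v : Fin n → ℝ) :
    ∑ k, gradQ Q c x k * v k = (Q *ᵥ x + c) ⬝ᵥ v :=
  rfl

lemma quadF_add_smul (hQ : ∀ k l, Q k l = Q l k) (x v : Fin n → ℝ) (τ : ℝ) :
    quadF Q c α (x + τ • v) = quadF Q c α x + τ * ∑ k, gradQ Q c x k * v k
      + τ ^ 2 / 2 * ∑ k, ∑ l, Q k l * v k * v l := by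
  have hsymm : x ⬝ᵥ (Q *ᵥ v) = (Q *ᵥ x) ⬝ᵥ v := by
    rw [dotProduct_mulVec, ← mulVec_transpose, show Qᵀ = Q from Matrix.ext fun k l => hQ l k]
  have hlin : ∀ y, ∑ i, c i * y i = c ⬝ᵥ y := fun _ => rfl
  simp only [quadF, hlin, sum_gradQ_mul, sum_sum_mul_eq_dotProduct_mulVec, mulVec_add,
    mulVec_smul, dotProduct_add, add_dotProduct, dotProduct_smul, smul_dotProduct, smul_eq_mul,
    hsymm, dotProduct_comm v (Q *ᵥ x)]
  ring

lemma sum_gradQ_mul_sub (Q : Matrix (Fin n) (Fin n) ℝ) (c x y : Fin n → ℝ) :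
    ∑ k, gradQ Q c y k * (x k - y k) = -(∑ k, gradQ Q c x k * (y - x) k
      + ∑ k, ∑ l, Q k l * (y - x) k * (y - x) l) := by
  obtain ⟨d, rfl⟩ : ∃ d, y = x + d := ⟨y - x, by abel⟩
  change (Q *ᵥ (x + d) + c) ⬝ᵥ (x - (x + d)) = _
  simp only [add_sub_cancel_left, sub_add_cancel_left, sum_gradQ_mul,
    sum_sum_mul_eq_dotProduct_mulVec, mulVec_add, add_dotProduct, dotProduct_neg,
    dotProduct_comm d (Q *ᵥ d)]
  ring

lemma sum_mul_smul (g : Fin n → ℝ) (r : ℝ) (v : Fin n → ℝ) :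
    ∑ k, g k * (r • v) k = r * ∑ k, g k * v k := by
  simp [Finset.mul_sum, mul_left_comm]

lemma sum_sum_mul_smul (Q : Matrix (Fin n) (Fin n) ℝ) (r : ℝ) (v : Fin n → ℝ) :
    ∑ k, ∑ l, Q k l * (r • v) k * (r • v) l = r ^ 2 * ∑ k, ∑ l, Q k l * v k * v l := by
  simp only [Finset.mul_sum, Pi.smul_apply, smul_eq_mul]
  exact Finset.sum_congr rfl fun _ _ => Finset.sum_congr rfl fun _ _ => by ring

end Quadratic

section LocalMinimizers

variable {n : ℕ} {f : (Fin n → ℝ) → ℝ} {X : Set (Fin n → ℝ)} {x : Fin n → ℝ}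

lemma IsStrongLocMin.isStrictLocMin (h : IsStrongLocMin f X x) : IsStrictLocMin f X x := by
  obtain ⟨hx, c, hc, ε, hε, hgrowth⟩ := h
  refine ⟨hx, ε, hε, fun y hy hyε hyx => ?_⟩
  have := mul_pos hc (pow_pos (n2_pos (sub_ne_zero.2 hyx)) 2)
  linarith [hgrowth y hy hyε]

lemma IsStrictLocMin.isLocMin' (h : IsStrictLocMin f X x) : IsLocMin' f X x := by
  obtain ⟨hx, ε, hε, hlt⟩ := h
  refine ⟨hx, ε, hε, fun y hy hyε => ?_⟩
  rcases eq_or_ne y x with rfl | hyx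
  · rfl
  · exact (hlt y hy hyε hyx).le

lemma IsStrictLocMin.of_eqOn {g : (Fin n → ℝ) → ℝ} {Y : Set (Fin n → ℝ)}
    (h : IsStrictLocMin f X x) (hx : x ∈ Y) (hYX : Y ⊆ X) (hfg : EqOn f g Y) :
    IsStrictLocMin g Y x := by
  obtain ⟨-, ε, hε, hlt⟩ := h
  exact ⟨hx, ε, hε, fun y hy hyε hyx => hfg hx ▸ hfg hy ▸ hlt y (hYX hy) hyε hyx⟩

/- A point near `x` with the value `f x` is again a local minimizer, so isolation forces
strictness. -/
lemma IsIsolatedLocMin.isStrictLocMin (h : IsIsolatedLocMin f X x) : IsStrictLocMin f X x := by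
  obtain ⟨⟨hx, ε, hε, hmin⟩, ε', hε', hiso⟩ := h
  refine ⟨hx, min (ε / 2) ε', by positivity, fun y hy hyx hne => ?_⟩
  refine (hmin y hy (by linarith [min_le_left (ε / 2) ε'])).lt_of_ne fun hfy => hne ?_
  refine hiso y ⟨hy, ε / 2, by positivity, fun z hz hzy => hfy ▸ hmin z hz ?_⟩
    (hyx.trans_le (min_le_right _ _))
  have := n2_add_le (z - y) (y - x)
  rw [sub_add_sub_cancel] at this
  linarith [min_le_left (ε / 2) ε']

lemma IsLocMin'.isIsolatedLocMin {stat : (Fin n → ℝ) → Prop} (h : IsLocMin' f X x)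
    (hstat : ∀ y, IsLocMin' f X y → stat y)
    (hiso : ∃ ε > (0:ℝ), ∀ y, stat y → n2 (y - x) < ε → y = x) : IsIsolatedLocMin f X x :=
  let ⟨ε, hε, hiso⟩ := hiso
  ⟨h, ε, hε, fun y hy => hiso y (hstat y hy)⟩

lemma eventually_add_smul_mem_and_n2_lt (hX : Convex ℝ X) (hx : x ∈ X) {v : Fin n → ℝ} {δ ε : ℝ}
    (hδ : 0 < δ) (hv : x + δ • v ∈ X) (hε : 0 < ε) :
    ∀ᶠ τ in 𝓝[>] (0:ℝ), x + τ • v ∈ X ∧ n2 (x + τ • v - x) < ε := by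
  have hsmall : ∀ᶠ τ in 𝓝[>] (0:ℝ), τ * n2 v < ε := Eventually.filter_mono nhdsWithin_le_nhds <|
    ((continuous_id.mul continuous_const).continuousAt (x := 0)).eventually_lt continuousAt_const
      (by simpa using hε)
  filter_upwards [Ioc_mem_nhdsGT hδ, hsmall] with τ hτ hτε
  refine ⟨hX.add_smul_mem_of_mem_Icc hx hv ⟨hτ.1.le, hτ.2⟩, ?_⟩
  rwa [add_sub_cancel_left, n2_smul, abs_of_pos hτ.1]

lemma IsLocMin'.hasDirDeriv_nonneg (h : IsLocMin' f X x) (hX : Convex ℝ X) {v : Fin n → ℝ}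
    {δ d : ℝ} (hδ : 0 < δ) (hv : x + δ • v ∈ X) (hd : HasDirDeriv f x v d) : 0 ≤ d := by
  obtain ⟨hx, ε, hε, hmin⟩ := h
  refine ge_of_tendsto hd ?_
  filter_upwards [eventually_add_smul_mem_and_n2_lt hX hx hδ hv hε, self_mem_nhdsWithin]
    with τ ⟨hτX, hτε⟩ (hτ : 0 < τ)
  exact div_nonneg (sub_nonneg.2 (hmin _ hτX hτε)) hτ.le

end LocalMinimizers

section DirectionalDerivatives

variable {n : ℕ} {f g : (Fin n → ℝ) → ℝ} {x v : Fin n → ℝ}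

lemma HasDirDeriv2.congr_of_eqOn_segment {d₁ d₂ δ : ℝ} (h : HasDirDeriv2 g x v d₁ d₂)
    (hδ : 0 < δ) (hfg : ∀ τ ∈ Icc 0 δ, f (x + τ • v) = g (x + τ • v)) :
    HasDirDeriv2 f x v d₁ d₂ := by
  have hx : f x = g x := by simpa using hfg 0 ⟨le_rfl, hδ.le⟩
  have hseg : ∀ᶠ τ in 𝓝[>] (0:ℝ), f (x + τ • v) = g (x + τ • v) := by
    filter_upwards [Ioc_mem_nhdsGT hδ] with τ hτ using hfg τ ⟨hτ.1.le, hτ.2⟩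
  refine ⟨h.1.congr' ?_, h.2.congr' ?_⟩ <;> filter_upwards [hseg] with τ hτ <;> rw [hτ, hx]

lemma hasDirDeriv2_quadF {Q : Matrix (Fin n) (Fin n) ℝ} {c : Fin n → ℝ} {α : ℝ}
    (hQ : ∀ k l, Q k l = Q l k) (x v : Fin n → ℝ) :
    HasDirDeriv2 (quadF Q c α) x v (∑ k, gradQ Q c x k * v k)
      (∑ k, ∑ l, Q k l * v k * v l) := by
  set G := ∑ k, gradQ Q c x k * v k
  set H := ∑ k, ∑ l, Q k l * v k * v l
  have hlin : Tendsto (fun τ : ℝ => G + τ / 2 * H) (𝓝[>] 0) (𝓝 G) := by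
    have hcont : Continuous fun τ : ℝ => G + τ / 2 * H := by fun_prop
    simpa using tendsto_nhdsWithin_of_tendsto_nhds (hcont.tendsto 0)
  refine ⟨hlin.congr' ?_, tendsto_const_nhds.congr' ?_⟩ <;>
    filter_upwards [self_mem_nhdsWithin] with τ (hτ : 0 < τ) <;>
    rw [quadF_add_smul hQ] <;> field_simp <;> ring

end DirectionalDerivatives

lemma exists_tendsto_normalize_mem_tangentCone {n : ℕ} {S : Set (Fin n → ℝ)} {x : Fin n → ℝ}
    {y : ℕ → Fin n → ℝ} (hyS : ∀ k, y k ∈ S) (hyx : ∀ k, y k ≠ x)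
    (hlim : Tendsto (fun k => n2 (y k - x)) atTop (𝓝 0)) :
    ∃ w ∈ TangentCone S x, w ≠ 0 ∧ ∃ φ : ℕ → ℕ, StrictMono φ ∧
      Tendsto (fun k => (n2 (y (φ k) - x))⁻¹ • (y (φ k) - x)) atTop (𝓝 w) := by
  have hr : ∀ k, 0 < n2 (y k - x) := fun k => n2_pos (sub_ne_zero.2 (hyx k))
  have hunit : ∀ k, (n2 (y k - x))⁻¹ • (y k - x) ∈ {v | n2 v = 1} := fun k => by
    simp [n2_smul, abs_of_pos (hr k), (hr k).ne']
  obtain ⟨w, hw, φ, hφ, hwlim⟩ := isCompact_n2_eq_one.tendsto_subseq hunit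
  have hlimφ := hlim.comp hφ.tendsto_atTop
  refine ⟨w, ⟨y ∘ φ, fun k => n2 (y (φ k) - x), fun k => hyS _, ?_, fun k => hr _, hlimφ, hwlim⟩,
    fun hw0 => by simp [hw0, n2] at hw, φ, hφ, hwlim⟩
  exact tendsto_iff_norm_sub_tendsto_zero.2
    (squeeze_zero (fun _ => norm_nonneg _) (fun k => norm_le_n2 _) hlimφ)

/- Otherwise there are `y → x` in `S` violating the bound with constants `1/(k+1)`; a limit `w`
of the directions of `y - x` lies in the critical cone with `wᵀQw ≤ 0`. -/
lemma exists_quadratic_growth_of_copositive {n : ℕ} {S : Set (Fin n → ℝ)} {x g : Fin n → ℝ}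
    {Q : Matrix (Fin n) (Fin n) ℝ} {t : ℝ} (ht : 0 < t)
    (hstat : ∀ y ∈ S, 0 ≤ ∑ k, g k * (y - x) k)
    (hcop : ∀ v ∈ TangentCone S x, v ≠ 0 → ∑ k, g k * v k = 0 →
      0 < ∑ k, ∑ l, Q k l * v k * v l) :
    ∃ c > (0:ℝ), ∃ ε > (0:ℝ), ∀ y ∈ S, n2 (y - x) < ε →
      c * n2 (y - x) ^ 2 ≤ ∑ k, g k * (y - x) k + t * ∑ k, ∑ l, Q k l * (y - x) k * (y - x) l := by
  set G : (Fin n → ℝ) → ℝ := fun v => ∑ k, g k * v k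
  set H : (Fin n → ℝ) → ℝ := fun v => ∑ k, ∑ l, Q k l * v k * v l
  by_contra! hcon
  choose y hyS hyε hylt using fun k : ℕ =>
    hcon (1 / (k + 1)) (by positivity) (1 / (k + 1)) (by positivity)
  have hyx : ∀ k, y k ≠ x := fun k hk => by simpa [hk, n2] using hylt k
  have he := tendsto_one_div_add_atTop_nhds_zero_nat (𝕜 := ℝ)
  obtain ⟨w, hwT, hw0, φ, hφ, hwlim⟩ := exists_tendsto_normalize_mem_tangentCone hyS hyx
    (squeeze_zero (fun k => n2_nonneg _) (fun k => (hyε k).le) he)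
  set r := fun k => n2 (y (φ k) - x)
  set u := fun k => (r k)⁻¹ • (y (φ k) - x)
  set e := fun k => 1 / ((φ k : ℝ) + 1)
  have hr : ∀ k, 0 < r k := fun k => n2_pos (sub_ne_zero.2 (hyx _))
  have heφ : Tendsto e atTop (𝓝 0) := he.comp hφ.tendsto_atTop
  have hrφ : Tendsto r atTop (𝓝 0) :=
    squeeze_zero (fun k => (hr k).le) (fun k => (hyε (φ k)).le) heφ
  have hu1 : ∀ k, n2 (u k) = 1 := fun k => by
    simp only [u, n2_smul, abs_of_pos (inv_pos.2 (hr k))]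
    exact inv_mul_cancel₀ (hr k).ne'
  have hGu : ∀ k, 0 ≤ G (u k) := fun k => by
    simpa only [G, u, sum_mul_smul] using mul_nonneg (inv_pos.2 (hr k)).le (hstat _ (hyS (φ k)))
  have hbound : ∀ k, G (u k) + t * (r k * H (u k)) < r k * e k := fun k => by
    have hyu : y (φ k) - x = r k • u k := by simp [u, smul_smul, (hr k).ne']
    have h := hylt (φ k)
    rw [hyu, sum_mul_smul, sum_sum_mul_smul, n2_smul, abs_of_pos (hr k), hu1 k, mul_one] at h
    refine lt_of_mul_lt_mul_left ?_ (hr k).le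
    linarith
  have hGcont : Continuous G := by fun_prop
  have hHcont : Continuous H := by fun_prop
  have hHw : t * H w ≤ 0 := by
    refine le_of_tendsto_of_tendsto' ((hHcont.tendsto w).comp hwlim |>.const_mul t) heφ
      fun k => ?_
    show t * H (u k) ≤ e k
    refine (lt_of_mul_lt_mul_left ?_ (hr k).le).le
    linarith [hbound k, hGu k]
  have hGw : G w ≤ 0 := by
    refine le_of_tendsto_of_tendsto' ((hGcont.tendsto w).comp hwlim)
      (by simpa using hrφ.mul (heφ.sub ((hHcont.tendsto w).comp hwlim |>.const_mul t)))
      fun k => ?_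
    show G (u k) ≤ r k * (e k - t * H (u k))
    linarith [hbound k]
  have hGw' : 0 ≤ G w := ge_of_tendsto ((hGcont.tendsto w).comp hwlim) (Eventually.of_forall hGu)
  have := hcop w hwT hw0 (le_antisymm hGw hGw')
  nlinarith

def StrictlyCopositiveOnCriticalCone {n : ℕ} (Q : Matrix (Fin n) (Fin n) ℝ) (c : Fin n → ℝ)
    (S : Set (Fin n → ℝ)) (x : Fin n → ℝ) : Prop :=
  ∀ v ∈ TangentCone S x, v ≠ 0 → ∑ k, gradQ Q c x k * v k = 0 →
    0 < ∑ k, ∑ l, Q k l * v k * v l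

section QuadraticProgram

variable {n : ℕ} {Q : Matrix (Fin n) (Fin n) ℝ} {c : Fin n → ℝ} {α : ℝ} {S : Set (Fin n → ℝ)}
  {x : Fin n → ℝ}

lemma IsLocMin'.isStatQ (hQ : ∀ k l, Q k l = Q l k) (hS : Convex ℝ S)
    (h : IsLocMin' (quadF Q c α) S x) : IsStatQ Q c S x :=
  ⟨h.1, fun y hy => h.hasDirDeriv_nonneg hS one_pos (by rwa [one_smul, add_sub_cancel])
    (hasDirDeriv2_quadF hQ x (y - x)).1⟩

lemma IsStrictLocMin.strictlyCopositiveOnCriticalCone (hQ : ∀ k l, Q k l = Q l k)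
    (hS : IsPolyhedron S) (h : IsStrictLocMin (quadF Q c α) S x) :
    StrictlyCopositiveOnCriticalCone Q c S x := by
  intro v hv hv0 hG
  obtain ⟨hx, ε, hε, hlt⟩ := h
  obtain ⟨δ, hδ, hδS⟩ := hS.exists_add_smul_mem_of_mem_tangentCone hx hv
  obtain ⟨τ, ⟨hτS, hτε⟩, hτ : 0 < τ⟩ :=
    ((eventually_add_smul_mem_and_n2_lt hS.convex hx hδ hδS hε).and self_mem_nhdsWithin).exists
  have := hlt _ hτS hτε (by simpa [hv0] using hτ.ne')
  rw [quadF_add_smul hQ, hG] at this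
  nlinarith [pow_pos hτ 2]

lemma IsStatQ.isStrongLocMin (hQ : ∀ k l, Q k l = Q l k) (hstat : IsStatQ Q c S x)
    (hcop : StrictlyCopositiveOnCriticalCone Q c S x) : IsStrongLocMin (quadF Q c α) S x := by
  obtain ⟨C, hC, ε, hε, hgrowth⟩ :=
    exists_quadratic_growth_of_copositive (t := 1 / 2) (by norm_num) hstat.2 hcop
  refine ⟨hstat.1, C, hC, ε, hε, fun y hy hyε => ?_⟩
  have := quadF_add_smul (c := c) (α := α) hQ x (y - x) 1
  rw [one_smul, add_sub_cancel] at this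
  linarith [hgrowth y hy hyε]

lemma IsStatQ.isIsolatedStatQ (hstat : IsStatQ Q c S x)
    (hcop : StrictlyCopositiveOnCriticalCone Q c S x) : IsIsolatedStatQ Q c S x := by
  obtain ⟨C, hC, ε, hε, hgrowth⟩ := exists_quadratic_growth_of_copositive one_pos hstat.2 hcop
  refine ⟨hstat, ε, hε, fun y hy hyε => by_contra fun hyx => ?_⟩
  have hxy := hy.2 x hstat.1
  rw [sum_gradQ_mul_sub] at hxy
  have := mul_pos hC (pow_pos (n2_pos (sub_ne_zero.2 hyx)) 2)
  linarith [hgrowth y hy.1 hyε]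

theorem tfae_quadF (hQ : ∀ k l, Q k l = Q l k) (hS : IsPolyhedron S) :
    [IsStrongLocMin (quadF Q c α) S x, IsStrictLocMin (quadF Q c α) S x,
      IsIsolatedLocMin (quadF Q c α) S x,
      IsIsolatedStatQ Q c S x ∧ IsLocMin' (quadF Q c α) S x,
      IsStatQ Q c S x ∧ StrictlyCopositiveOnCriticalCone Q c S x].TFAE := by
  tfae_have 1 → 2 := IsStrongLocMin.isStrictLocMin
  tfae_have 2 → 5 := fun h =>
    ⟨h.isLocMin'.isStatQ hQ hS.convex, h.strictlyCopositiveOnCriticalCone hQ hS⟩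
  tfae_have 5 → 1 := fun h => h.1.isStrongLocMin hQ h.2
  tfae_have 3 → 2 := IsIsolatedLocMin.isStrictLocMin
  tfae_have 4 → 3 := fun h => h.2.isIsolatedLocMin (fun _ hy => hy.isStatQ hQ hS.convex) h.1.2
  tfae_have 5 → 4 := fun h =>
    ⟨h.1.isIsolatedStatQ h.2, (h.1.isStrongLocMin hQ h.2).isStrictLocMin.isLocMin'⟩
  tfae_finish

end QuadraticProgram

lemma exists_pos_forall_of_finite {ι : Type*} [Finite ι] {a : ι → Prop} {p : ι → ℝ → Prop}
    (hp : ∀ i, a i → ∀ ε ε', 0 < ε' → ε' ≤ ε → p i ε → p i ε')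
    (h : ∀ i, a i → ∃ ε > (0:ℝ), p i ε) : ∃ ε > (0:ℝ), ∀ i, a i → p i ε := by
  have hev : ∀ i, ∀ᶠ ε in 𝓝[>] (0:ℝ), a i → p i ε := fun i => by
    by_cases hi : a i
    · obtain ⟨ε, hε, hpε⟩ := h i hi
      filter_upwards [Ioc_mem_nhdsGT hε] with ε' hε' using fun _ => hp i hi ε ε' hε'.1 hε'.2 hpε
    · exact Eventually.of_forall fun _ h => absurd h hi
  obtain ⟨ε, hpε, hε⟩ := ((eventually_all.2 hev).and self_mem_nhdsWithin).exists
  exact ⟨ε, hε, hpε⟩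

structure IsPLQ {n I : ℕ} (f : (Fin n → ℝ) → ℝ) (P : Fin I → Set (Fin n → ℝ))
    (Q : Fin I → Matrix (Fin n) (Fin n) ℝ) (c : Fin I → Fin n → ℝ) (α : Fin I → ℝ) : Prop where
  isPolyhedron : ∀ i, IsPolyhedron (P i)
  iUnion_eq : ⋃ i, P i = univ
  symm : ∀ i k l, Q i k l = Q i l k
  eq_quadF : ∀ i, ∀ x ∈ P i, f x = quadF (Q i) (c i) (α i) x

namespace IsPLQ

variable {n I : ℕ} {f : (Fin n → ℝ) → ℝ} {P : Fin I → Set (Fin n → ℝ)}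
  {Q : Fin I → Matrix (Fin n) (Fin n) ℝ} {c : Fin I → Fin n → ℝ} {α : Fin I → ℝ}
  {X : Set (Fin n → ℝ)} {x : Fin n → ℝ}

lemma exists_mem (hf : IsPLQ f P Q c α) (y : Fin n → ℝ) : ∃ i, y ∈ P i :=
  mem_iUnion.1 (hf.iUnion_eq ▸ mem_univ y)

lemma eventually_exists_active (hf : IsPLQ f P Q c α) (x : Fin n → ℝ) :
    ∀ᶠ y in 𝓝 x, ∃ i, x ∈ P i ∧ y ∈ P i := by
  have hinactive : ∀ᶠ y in 𝓝 x, ∀ i, x ∉ P i → y ∉ P i := eventually_all.2 fun i => by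
    by_cases hxi : x ∈ P i
    · exact Eventually.of_forall fun _ h => absurd hxi h
    · filter_upwards [(hf.isPolyhedron i).isClosed.isOpen_compl.mem_nhds hxi] with y hy
        using fun _ => hy
  filter_upwards [hinactive] with y hy
  obtain ⟨i, hyi⟩ := hf.exists_mem y
  exact ⟨i, not_not.1 fun hxi => hy i hxi hyi, hyi⟩

/- Some piece contains `y + τ • v` for arbitrarily small `τ > 0`, hence, being closed, also `y`. -/
lemma exists_mem_segment (hf : IsPLQ f P Q c α) (y v : Fin n → ℝ) :
    ∃ i, y ∈ P i ∧ ∃ δ > (0:ℝ), y + δ • v ∈ P i := by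
  obtain ⟨i, hi⟩ : ∃ i, ∃ᶠ τ in 𝓝[>] (0:ℝ), y + τ • v ∈ P i :=
    frequently_exists.1 (Eventually.of_forall fun τ => hf.exists_mem (y + τ • v)).frequently
  have hlim : Tendsto (fun τ : ℝ => y + τ • v) (𝓝[>] 0) (𝓝 y) := by
    have hcont : Continuous fun τ : ℝ => y + τ • v := by fun_prop
    simpa using tendsto_nhdsWithin_of_tendsto_nhds (hcont.tendsto 0)
  obtain ⟨δ, hδi, hδ : 0 < δ⟩ := (hi.and_eventually self_mem_nhdsWithin).exists
  exact ⟨i, (hf.isPolyhedron i).isClosed.mem_of_frequently_of_tendsto hi hlim, δ, hδ, hδi⟩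

lemma hasDirDeriv2_of_mem (hf : IsPLQ f P Q c α) {i : Fin I} {y v : Fin n → ℝ} {δ : ℝ}
    (hy : y ∈ P i) (hδ : 0 < δ) (hyv : y + δ • v ∈ P i) :
    HasDirDeriv2 f y v (∑ k, gradQ (Q i) (c i) y k * v k) (∑ k, ∑ l, Q i k l * v k * v l) :=
  (hasDirDeriv2_quadF (hf.symm i) y v).congr_of_eqOn_segment hδ fun _ hτ =>
    hf.eq_quadF i _ ((hf.isPolyhedron i).convex.add_smul_mem_of_mem_Icc hy hyv hτ)

lemma isStatF_of_isLocMin' (hf : IsPLQ f P Q c α) (hX : Convex ℝ X) {y : Fin n → ℝ}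
    (h : IsLocMin' f X y) : IsStatF f X y := by
  refine ⟨h.1, fun x hx => ?_⟩
  obtain ⟨i, hy, δ, hδ, hδi⟩ := hf.exists_mem_segment y (x - y)
  have hd := (hf.hasDirDeriv2_of_mem hy hδ hδi).1
  exact ⟨_, hd, h.hasDirDeriv_nonneg hX one_pos (by rwa [one_smul, add_sub_cancel]) hd⟩

lemma isStatQ_of_isStatF (hf : IsPLQ f P Q c α) {y : Fin n → ℝ} (h : IsStatF f X y) {i : Fin I}
    (hyi : y ∈ P i) : IsStatQ (Q i) (c i) (X ∩ P i) y := by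
  refine ⟨⟨h.1, hyi⟩, fun x hx => ?_⟩
  obtain ⟨d, hd, hd0⟩ := h.2 x hx.1
  have hxy : y + (1:ℝ) • (x - y) ∈ P i := by simpa using hx.2
  exact (tendsto_nhds_unique (hf.hasDirDeriv2_of_mem hyi one_pos hxy).1 hd) ▸ hd0

lemma isStrongLocMin_of_forall_active (hf : IsPLQ f P Q c α) (hx : x ∈ X)
    (h : ∀ i, x ∈ P i → IsStrongLocMin (quadF (Q i) (c i) (α i)) (X ∩ P i) x) :
    IsStrongLocMin f X x := by
  obtain ⟨C, hC, hCi⟩ := exists_pos_forall_of_finite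
    (p := fun i C => ∃ ε > (0:ℝ), ∀ y ∈ X ∩ P i, n2 (y - x) < ε →
      quadF (Q i) (c i) (α i) x + C * n2 (y - x) ^ 2 ≤ quadF (Q i) (c i) (α i) y)
    (fun _ _ _ _ _ hle ⟨ε, hε, hgrowth⟩ => ⟨ε, hε, fun y hy hyε => le_trans
      (by gcongr) (hgrowth y hy hyε)⟩) fun i hi => (h i hi).2
  obtain ⟨ε, hε, hεi⟩ := exists_pos_forall_of_finite
    (fun _ _ _ _ _ hle hgrowth y hy hyε => hgrowth y hy (hyε.trans_le hle)) hCi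
  obtain ⟨δ, hδ, hactive⟩ := exists_n2_lt_of_eventually (hf.eventually_exists_active x)
  refine ⟨hx, C, hC, min ε δ, lt_min hε hδ, fun y hy hyε => ?_⟩
  obtain ⟨i, hxi, hyi⟩ := hactive y (hyε.trans_le (min_le_right _ _))
  rw [hf.eq_quadF i x hxi, hf.eq_quadF i y hyi]
  exact hεi i hxi y ⟨hy, hyi⟩ (hyε.trans_le (min_le_left _ _))

lemma isIsolatedStatF_of_forall_active (hf : IsPLQ f P Q c α) (hstat : IsStatF f X x)
    (h : ∀ i, x ∈ P i → IsIsolatedStatQ (Q i) (c i) (X ∩ P i) x) : IsIsolatedStatF f X x := by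
  obtain ⟨ε, hε, hεi⟩ := exists_pos_forall_of_finite
    (fun _ _ _ _ _ hle hiso y hy hyε => hiso y hy (hyε.trans_le hle)) fun i hi => (h i hi).2
  obtain ⟨δ, hδ, hactive⟩ := exists_n2_lt_of_eventually (hf.eventually_exists_active x)
  refine ⟨hstat, min ε δ, lt_min hε hδ, fun y hy hyε => ?_⟩
  obtain ⟨i, hxi, hyi⟩ := hactive y (hyε.trans_le (min_le_right _ _))
  exact hεi i hxi y (hf.isStatQ_of_isStatF hy hyi) (hyε.trans_le (min_le_left _ _))

theorem tfae_isStrongLocMin (hf : IsPLQ f P Q c α) (hX : IsPolyhedron X) (hx : x ∈ X) :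
    [IsStrongLocMin f X x, IsStrictLocMin f X x, IsIsolatedLocMin f X x,
      IsIsolatedStatF f X x ∧ IsLocMin' f X x,
      ∀ i, x ∈ P i → IsStatQ (Q i) (c i) (X ∩ P i) x ∧
        StrictlyCopositiveOnCriticalCone (Q i) (c i) (X ∩ P i) x].TFAE := by
  have hpiece := fun i =>
    tfae_quadF (c := c i) (α := α i) (x := x) (hf.symm i) (hX.inter (hf.isPolyhedron i))
  have hstrong : (∀ i, x ∈ P i → IsStatQ (Q i) (c i) (X ∩ P i) x ∧
      StrictlyCopositiveOnCriticalCone (Q i) (c i) (X ∩ P i) x) → IsStrongLocMin f X x :=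
    fun h => hf.isStrongLocMin_of_forall_active hx fun i hi => ((hpiece i).out 4 0).1 (h i hi)
  tfae_have 1 → 2 := IsStrongLocMin.isStrictLocMin
  tfae_have 2 → 5 := fun h i hi => ((hpiece i).out 1 4).1
    (h.of_eqOn (Y := X ∩ P i) ⟨hx, hi⟩ inter_subset_left fun y hy => hf.eq_quadF i y hy.2)
  tfae_have 5 → 1 := hstrong
  tfae_have 3 → 2 := IsIsolatedLocMin.isStrictLocMin
  tfae_have 4 → 3 := fun h =>
    h.2.isIsolatedLocMin (fun _ hy => hf.isStatF_of_isLocMin' hX.convex hy) h.1.2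
  tfae_have 5 → 4 := fun h =>
    have hmin := (hstrong h).isStrictLocMin.isLocMin'
    ⟨hf.isIsolatedStatF_of_forall_active (hf.isStatF_of_isLocMin' hX.convex hmin)
      fun i hi => (h i hi).1.isIsolatedStatQ (h i hi).2, hmin⟩
  tfae_finish

lemma isStatF_of_forall_active (hf : IsPLQ f P Q c α) (hX : IsPolyhedron X) (hx : x ∈ X)
    (h : ∀ i, x ∈ P i → IsStatQ (Q i) (c i) (X ∩ P i) x ∧
      StrictlyCopositiveOnCriticalCone (Q i) (c i) (X ∩ P i) x) : IsStatF f X x :=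
  have hstrong : IsStrongLocMin f X x := ((hf.tfae_isStrongLocMin hX hx).out 4 0).1 h
  hf.isStatF_of_isLocMin' hX.convex hstrong.isStrictLocMin.isLocMin'

lemma exists_pos_hasDirDeriv2 (hf : IsPLQ f P Q c α) (hX : Convex ℝ X) (hx : x ∈ X)
    (hcop : ∀ i, x ∈ P i → StrictlyCopositiveOnCriticalCone (Q i) (c i) (X ∩ P i) x)
    {v : Fin n → ℝ} {δ d₁ : ℝ} (hδ : 0 < δ) (hv : x + δ • v ∈ X) (hv0 : v ≠ 0)
    (hd₁ : HasDirDeriv f x v d₁) (h0 : d₁ = 0) : ∃ d₂, HasDirDeriv2 f x v d₁ d₂ ∧ 0 < d₂ := by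
  obtain ⟨j, hxj, δ', hδ', hδ'j⟩ := hf.exists_mem_segment x v
  have hD := hf.hasDirDeriv2_of_mem hxj hδ' hδ'j
  have hG := tendsto_nhds_unique hD.1 hd₁
  have hmin : min δ δ' ∈ Icc 0 δ ∧ min δ δ' ∈ Icc 0 δ' :=
    ⟨⟨(lt_min hδ hδ').le, min_le_left _ _⟩, ⟨(lt_min hδ hδ').le, min_le_right _ _⟩⟩
  have hvT : v ∈ TangentCone (X ∩ P j) x :=
    mem_tangentCone_of_add_smul_mem (hX.inter (hf.isPolyhedron j).convex) ⟨hx, hxj⟩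
      (lt_min hδ hδ') ⟨hX.add_smul_mem_of_mem_Icc hx hv hmin.1,
        (hf.isPolyhedron j).convex.add_smul_mem_of_mem_Icc hxj hδ'j hmin.2⟩
  exact ⟨_, hG ▸ hD, hcop j hxj v hvT hv0 (hG.trans h0)⟩

lemma pos_of_hasDirDeriv2 (hf : IsPLQ f P Q c α) {i : Fin I} {w : Fin n → ℝ} {δ d₁ d₂ : ℝ}
    (hxi : x ∈ P i) (hδ : 0 < δ) (hwi : x + δ • w ∈ P i) (hd : HasDirDeriv2 f x w d₁ d₂)
    (hd₂ : 0 < d₂) : 0 < ∑ k, ∑ l, Q i k l * w k * w l := by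
  have hD := hf.hasDirDeriv2_of_mem hxi hδ hwi
  obtain rfl := tendsto_nhds_unique hd.1 hD.1
  exact tendsto_nhds_unique hd.2 hD.2 ▸ hd₂

theorem secondOrder_iff (hf : IsPLQ f P Q c α) (hX : IsPolyhedron X) (hx : x ∈ X) :
    ((∀ y ∈ X, ∃ d, HasDirDeriv f x (y - x) d ∧ 0 ≤ d) ∧
      ∀ y ∈ X, y ≠ x → ∀ d₁, HasDirDeriv f x (y - x) d₁ → d₁ = 0 →
        ∃ d₂, HasDirDeriv2 f x (y - x) d₁ d₂ ∧ 0 < d₂) ↔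
    ∀ i, x ∈ P i → IsStatQ (Q i) (c i) (X ∩ P i) x ∧
      StrictlyCopositiveOnCriticalCone (Q i) (c i) (X ∩ P i) x := by
  constructor
  · rintro ⟨hstat, hpos⟩ i hi
    refine ⟨hf.isStatQ_of_isStatF ⟨hx, hstat⟩ hi, fun v hv hv0 hG => ?_⟩
    obtain ⟨δ, hδ, hδX, hδi⟩ :=
      (hX.inter (hf.isPolyhedron i)).exists_add_smul_mem_of_mem_tangentCone ⟨hx, hi⟩ hv
    have hw : x + (1:ℝ) • (x + δ • v - x) ∈ P i := by simpa using hδi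
    have hD := hf.hasDirDeriv2_of_mem hi one_pos hw
    obtain ⟨d₂, hd₂, hd₂0⟩ := hpos _ hδX (by simpa [hv0] using hδ.ne') _ hD.1
      (by rw [add_sub_cancel_left, sum_mul_smul, hG, mul_zero])
    have := hf.pos_of_hasDirDeriv2 hi one_pos hw hd₂ hd₂0
    rw [add_sub_cancel_left, sum_sum_mul_smul] at this
    exact pos_of_mul_pos_right this (by positivity)
  · intro h
    refine ⟨(hf.isStatF_of_forall_active hX hx h).2, fun y hy hyx d₁ hd₁ h0 =>
      hf.exists_pos_hasDirDeriv2 hX.convex hx (fun i hi => (h i hi).2) one_pos ?_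
        (sub_ne_zero.2 hyx) hd₁ h0⟩
    rwa [one_smul, add_sub_cancel]

theorem secondOrderSufficient_iff (hf : IsPLQ f P Q c α) (hX : IsPolyhedron X) (hx : x ∈ X) :
    ((∀ y ∈ X, ∃ d, HasDirDeriv f x (y - x) d ∧ 0 ≤ d) ∧
      ∀ v ∈ TangentCone X x, v ≠ 0 → ∀ d₁, HasDirDeriv f x v d₁ → d₁ = 0 →
        ∃ d₂, HasDirDeriv2 f x v d₁ d₂ ∧ 0 < d₂) ↔
    ∀ i, x ∈ P i → IsStatQ (Q i) (c i) (X ∩ P i) x ∧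
      StrictlyCopositiveOnCriticalCone (Q i) (c i) (X ∩ P i) x := by
  constructor
  · rintro ⟨hstat, hpos⟩ i hi
    refine ⟨hf.isStatQ_of_isStatF ⟨hx, hstat⟩ hi, fun v hv hv0 hG => ?_⟩
    obtain ⟨δ, hδ, -, hδi⟩ :=
      (hX.inter (hf.isPolyhedron i)).exists_add_smul_mem_of_mem_tangentCone ⟨hx, hi⟩ hv
    obtain ⟨d₂, hd₂, hd₂0⟩ := hpos v (tangentCone_mono inter_subset_left x hv) hv0 _
      (hf.hasDirDeriv2_of_mem hi hδ hδi).1 hG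
    exact hf.pos_of_hasDirDeriv2 hi hδ hδi hd₂ hd₂0
  · intro h
    refine ⟨(hf.isStatF_of_forall_active hX hx h).2, fun v hv hv0 d₁ hd₁ h0 => ?_⟩
    obtain ⟨δ, hδ, hδX⟩ := hX.exists_add_smul_mem_of_mem_tangentCone hx hv
    exact hf.exists_pos_hasDirDeriv2 hX.convex hx (fun i hi => (h i hi).2) hδ hδX hv0 hd₁ h0

end IsPLQ

theorem stmt11_general {n I : ℕ} (f : (Fin n → ℝ) → ℝ)
    (P : Fin I → Set (Fin n → ℝ)) (hP : ∀ i, IsPolyhedron (P i))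
    (hcover : (⋃ i, P i) = Set.univ)
    (Qm : Fin I → Matrix (Fin n) (Fin n) ℝ) (hQ : ∀ i k l, Qm i k l = Qm i l k)
    (c : Fin I → Fin n → ℝ) (α : Fin I → ℝ)
    (hfq : ∀ i, ∀ x ∈ P i, f x = quadF (Qm i) (c i) (α i) x)
    (X : Set (Fin n → ℝ)) (hX : IsPolyhedron X)
    (xbar : Fin n → ℝ) (hxbar : xbar ∈ X) :
    -- abbreviations for the ten statements
    let A1 := IsStrongLocMin f X xbar
    let A2 := IsStrictLocMin f X xbar
    let A3 := IsIsolatedLocMin f X xbar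
    let A4 := IsIsolatedStatF f X xbar ∧ IsLocMin' f X xbar
    let B1 := ∀ i, xbar ∈ P i → IsStrongLocMin (quadF (Qm i) (c i) (α i)) (X ∩ P i) xbar
    let B2 := ∀ i, xbar ∈ P i → IsStrictLocMin (quadF (Qm i) (c i) (α i)) (X ∩ P i) xbar
    let B3 := ∀ i, xbar ∈ P i → IsIsolatedLocMin (quadF (Qm i) (c i) (α i)) (X ∩ P i) xbar
    let B4 := ∀ i, xbar ∈ P i →
      (IsIsolatedStatQ (Qm i) (c i) (X ∩ P i) xbar ∧
       IsLocMin' (quadF (Qm i) (c i) (α i)) (X ∩ P i) xbar)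
    let C := (∀ x ∈ X, ∃ d, HasDirDeriv f xbar (x - xbar) d ∧ 0 ≤ d) ∧
      (∀ x ∈ X, x ≠ xbar → ∀ d₁, HasDirDeriv f xbar (x - xbar) d₁ → d₁ = 0 →
        ∃ d₂, HasDirDeriv2 f xbar (x - xbar) d₁ d₂ ∧ 0 < d₂)
    let D1 := (∀ x ∈ X, ∃ d, HasDirDeriv f xbar (x - xbar) d ∧ 0 ≤ d) ∧
      (∀ v ∈ TangentCone X xbar, v ≠ 0 → ∀ d₁, HasDirDeriv f xbar v d₁ → d₁ = 0 →
        ∃ d₂, HasDirDeriv2 f xbar v d₁ d₂ ∧ 0 < d₂)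
    let D2 := ∀ i, xbar ∈ P i →
      (IsStatQ (Qm i) (c i) (X ∩ P i) xbar ∧
       ∀ v ∈ TangentCone (X ∩ P i) xbar, v ≠ 0 →
         (∑ k, gradQ (Qm i) (c i) xbar k * v k) = 0 →
         0 < ∑ k, ∑ l, Qm i k l * v k * v l)
    (A1 ↔ A2) ∧ (A2 ↔ A3) ∧ (A3 ↔ A4) ∧ (A4 ↔ B1) ∧ (B1 ↔ B2) ∧ (B2 ↔ B3) ∧
    (B3 ↔ B4) ∧ (B4 ↔ C) ∧ (C ↔ D1) ∧ (D1 ↔ D2) := by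
  intro A1 A2 A3 A4 B1 B2 B3 B4 C D1 D2
  have hf : IsPLQ f P Qm c α := ⟨hP, hcover, hQ, hfq⟩
  have hA := hf.tfae_isStrongLocMin hX hxbar
  have hB := fun i => tfae_quadF (c := c i) (α := α i) (x := xbar) (hQ i) (hX.inter (hP i))
  have tfae : [A1, A2, A3, A4, B1, B2, B3, B4, C, D1, D2].TFAE := by
    tfae_have 1 ↔ 11 := hA.out 0 4
    tfae_have 2 ↔ 11 := hA.out 1 4
    tfae_have 3 ↔ 11 := hA.out 2 4
    tfae_have 4 ↔ 11 := hA.out 3 4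
    tfae_have 5 ↔ 11 := forall₂_congr fun i _ => (hB i).out 0 4
    tfae_have 6 ↔ 11 := forall₂_congr fun i _ => (hB i).out 1 4
    tfae_have 7 ↔ 11 := forall₂_congr fun i _ => (hB i).out 2 4
    tfae_have 8 ↔ 11 := forall₂_congr fun i _ => (hB i).out 3 4
    tfae_have 9 ↔ 11 := hf.secondOrder_iff hX hxbar
    tfae_have 10 ↔ 11 := hf.secondOrderSufficient_iff hX hxbar
    tfae_finish
  exact ⟨tfae.out 0 1, tfae.out 1 2, tfae.out 2 3, tfae.out 3 4, tfae.out 4 5, tfae.out 5 6,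
    tfae.out 6 7, tfae.out 7 8, tfae.out 8 9, tfae.out 9 10⟩

/-- Equivalent characterizations of strong/strict/isolated local
minimizers of a linearly constrained PLQ program, including the piecewise versions on the
active pieces, the second-order sufficient condition, and strict copositivity on the
critical cones of the pieces. -/
theorem stmt11 {n I : ℕ} (f : (Fin n → ℝ) → ℝ) (hf : Continuous f)
    (P : Fin I → Set (Fin n → ℝ)) (hP : ∀ i, IsPolyhedron (P i))
    (hcover : (⋃ i, P i) = Set.univ)
    (Qm : Fin I → Matrix (Fin n) (Fin n) ℝ) (hQ : ∀ i k l, Qm i k l = Qm i l k)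
    (c : Fin I → Fin n → ℝ) (α : Fin I → ℝ)
    (hfq : ∀ i, ∀ x ∈ P i, f x = quadF (Qm i) (c i) (α i) x)
    (X : Set (Fin n → ℝ)) (hX : IsPolyhedron X)
    (xbar : Fin n → ℝ) (hxbar : xbar ∈ X) :
    -- abbreviations for the ten statements
    let A1 := IsStrongLocMin f X xbar
    let A2 := IsStrictLocMin f X xbar
    let A3 := IsIsolatedLocMin f X xbar
    let A4 := IsIsolatedStatF f X xbar ∧ IsLocMin' f X xbar
    let B1 := ∀ i, xbar ∈ P i → IsStrongLocMin (quadF (Qm i) (c i) (α i)) (X ∩ P i) xbar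
    let B2 := ∀ i, xbar ∈ P i → IsStrictLocMin (quadF (Qm i) (c i) (α i)) (X ∩ P i) xbar
    let B3 := ∀ i, xbar ∈ P i → IsIsolatedLocMin (quadF (Qm i) (c i) (α i)) (X ∩ P i) xbar
    let B4 := ∀ i, xbar ∈ P i →
      (IsIsolatedStatQ (Qm i) (c i) (X ∩ P i) xbar ∧
       IsLocMin' (quadF (Qm i) (c i) (α i)) (X ∩ P i) xbar)
    let C := (∀ x ∈ X, ∃ d, HasDirDeriv f xbar (x - xbar) d ∧ 0 ≤ d) ∧
      (∀ x ∈ X, x ≠ xbar → ∀ d₁, HasDirDeriv f xbar (x - xbar) d₁ → d₁ = 0 →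
        ∃ d₂, HasDirDeriv2 f xbar (x - xbar) d₁ d₂ ∧ 0 < d₂)
    let D1 := (∀ x ∈ X, ∃ d, HasDirDeriv f xbar (x - xbar) d ∧ 0 ≤ d) ∧
      (∀ v ∈ TangentCone X xbar, v ≠ 0 → ∀ d₁, HasDirDeriv f xbar v d₁ → d₁ = 0 →
        ∃ d₂, HasDirDeriv2 f xbar v d₁ d₂ ∧ 0 < d₂)
    let D2 := ∀ i, xbar ∈ P i →
      (IsStatQ (Qm i) (c i) (X ∩ P i) xbar ∧
       ∀ v ∈ TangentCone (X ∩ P i) xbar, v ≠ 0 →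
         (∑ k, gradQ (Qm i) (c i) xbar k * v k) = 0 →
         0 < ∑ k, ∑ l, Qm i k l * v k * v l)
    (A1 ↔ A2) ∧ (A2 ↔ A3) ∧ (A3 ↔ A4) ∧ (A4 ↔ B1) ∧ (B1 ↔ B2) ∧ (B2 ↔ B3) ∧
    (B3 ↔ B4) ∧ (B4 ↔ C) ∧ (C ↔ D1) ∧ (D1 ↔ D2) :=
  stmt11_general f P hP hcover Qm hQ c α hfq X hX xbar hxbar
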